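/- Let t be a rooted plane tree and list its vertices in lexicographic order as v_0 = ∅, v_1, …, v_{|t|−1}. Then for all 0 ≤ i < |t|, the first time the contour exploration visits v_i equals 2i − h(v_i); that is, inf{ j ≥ 0 : θ_t(j) = v_i } = 2i − h(v_i). Moreover, setting j(i) = 2i − h(v_i) for i < |t| and j(|t|) = 2|t|−2 (with v_{|t|} := v_0), for every 0 ≤ i < |t| and every 1 ≤ k < j(i+1) − j(i), the vertex θ_t(j(i)+k) is the parent of θ_t(j(i)+k−1), so that dist_t(θ_t(j(i)), θ_t(j(i)+k)) = k. -/

import Mathlib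

open MeasureTheory Filter Topology
open scoped ENNReal NNReal Classical

noncomputable section

namespace TreeSym

/-- Ulam–Harris words over the positive integers. -/
abbrev Vertex : Type := List ℕ+

instance : MeasurableSpace Vertex := ⊤
instance : MeasurableSpace (Finset Vertex) := ⊤

/-- A finite set of Ulam–Harris words is (the vertex set of) a rooted plane tree if it contains
the empty word, is prefix-closed, and is closed under decreasing the last letter. -/
def IsPlaneTreeSet (t : Finset Vertex) : Prop :=
  ([] : Vertex) ∈ t ∧
  (∀ v ∈ t, ∀ u : Vertex, u <+: v → u ∈ t) ∧
  (∀ v : Vertex, ∀ i j : ℕ+, v ++ [i] ∈ t → j ≤ i → v ++ [j] ∈ t)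

/-- The number of children of `v` in the vertex set `t`. -/
def nChild (t : Finset Vertex) (v : Vertex) : ℕ :=
  (t.filter fun w => ∃ i : ℕ+, w = v ++ [i]).card

/-- Length of the longest common prefix of two words. -/
def lcpLen : Vertex → Vertex → ℕ
  | a :: u, b :: v => if a = b then lcpLen u v + 1 else 0
  | _, _ => 0

/-- The graph distance between two vertices of a plane tree. -/
def treeDist (u v : Vertex) : ℕ := u.length + v.length - 2 * lcpLen u v

/-- History of the contour exploration of the plane tree with vertex set `t`
(most recently visited vertex first). -/
def contourHist (t : Finset Vertex) : ℕ → List Vertex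
  | 0 => [([] : Vertex)]
  | n + 1 =>
    let h := contourHist t n
    let cur := h.headI
    if (∃ m : ℕ, cur ++ [m.succPNat] ∈ t ∧ cur ++ [m.succPNat] ∉ h) then
      (cur ++ [(sInf {m : ℕ | cur ++ [m.succPNat] ∈ t ∧ cur ++ [m.succPNat] ∉ h}).succPNat]) :: h
    else
      cur.dropLast :: h

/-- The contour exploration `θ_t`. -/
def theta (t : Finset Vertex) (i : ℕ) : Vertex := (contourHist t i).headI

/-- Piecewise linear interpolation: `interpFun n f (i/n) = f i` for `0 ≤ i ≤ n`, linear in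
between. -/
def interpFun (n : ℕ) (f : ℕ → ℝ) (s : ℝ) : ℝ :=
  f 0 + ∑ k ∈ Finset.range n, (f (k + 1) - f k) * max 0 (min 1 (s * n - k))

lemma continuous_interpFun (n : ℕ) (f : ℕ → ℝ) : Continuous (interpFun n f) := by
  unfold interpFun
  refine continuous_const.add (continuous_finset_sum _ fun k _ => continuous_const.mul ?_)
  exact continuous_const.max (continuous_const.min
    ((continuous_id.mul continuous_const).sub continuous_const))

/-- Piecewise linear interpolation, as a continuous map on `[0,1]`. -/
def interpMap (n : ℕ) (f : ℕ → ℝ) : C(unitInterval, ℝ) :=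
  ⟨fun s => interpFun n f s, (continuous_interpFun n f).comp continuous_subtype_val⟩

/-- A multitype labeled plane tree with type space `S`: a finite set of Ulam–Harris words,
together with a type and a displacement (the label increment along the edge to the parent)
attached to each word. -/
structure MTree (S : Type*) where
  verts : Finset Vertex
  type : Vertex → S
  disp : Vertex → ℝ

/-- The underlying vertex set is a plane tree. -/
def MTree.IsPlaneTree {S : Type*} (T : MTree S) : Prop := IsPlaneTreeSet T.verts

instance {S : Type*} [MeasurableSpace S] : MeasurableSpace (MTree S) :=
  MeasurableSpace.comap (fun T => (T.verts, T.type, T.disp)) inferInstance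

/-- The label of a vertex: the sum of the displacements along the path from the root. -/
def labelOf {S : Type*} (T : MTree S) (v : Vertex) : ℝ :=
  ∑ j ∈ Finset.range v.length, T.disp (v.take (j + 1))

/-- The contour process, as a function on `ℝ`. -/
def contourFun {S : Type*} (T : MTree S) (s : ℝ) : ℝ :=
  interpFun (2 * T.verts.card - 2) (fun i => ((theta T.verts i).length : ℝ)) s

/-- The label process, as a function on `ℝ`. -/
def labelFun {S : Type*} (T : MTree S) (s : ℝ) : ℝ :=
  interpFun (2 * T.verts.card - 2) (fun i => labelOf T (theta T.verts i)) s

/-- The contour process `C` of a tree, as a continuous map on `[0,1]`. -/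
def contourProcess {S : Type*} (T : MTree S) : C(unitInterval, ℝ) :=
  interpMap (2 * T.verts.card - 2) fun i => ((theta T.verts i).length : ℝ)

/-- The label process `Z` of a labeled tree, as a continuous map on `[0,1]`. -/
def labelProcess {S : Type*} (T : MTree S) : C(unitInterval, ℝ) :=
  interpMap (2 * T.verts.card - 2) fun i => labelOf T (theta T.verts i)

/-- The process `Λ^{(q)}` counting visited vertices of type `q` along the contour. -/
def lambdaProcess {S : Type*} (q : S) (T : MTree S) : C(unitInterval, ℝ) :=
  interpMap (2 * T.verts.card - 2) fun i =>
    (((Finset.range i).filter fun j => T.type (theta T.verts j) = q).card : ℝ)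

/-! ### Symmetrization -/

/-- A vector of permutations, one for each potential vertex. -/
abbrev PermVec : Type := Vertex → Equiv.Perm ℕ+

/-- Relabel a word according to a permutation vector, the permutation used at each level being
the one attached to the (original) prefix. -/
def permWordAux (σ : PermVec) : Vertex → Vertex → Vertex
  | _, [] => []
  | p, i :: rest => σ p i :: permWordAux σ (p ++ [i]) rest

def permWord (σ : PermVec) (v : Vertex) : Vertex := permWordAux σ [] v

/-- The inverse relabeling. -/
def invWordAux (σ : PermVec) : Vertex → Vertex → Vertex
  | _, [] => []
  | p, j :: rest => (σ p)⁻¹ j :: invWordAux σ (p ++ [(σ p)⁻¹ j]) rest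

def invWord (σ : PermVec) (w : Vertex) : Vertex := invWordAux σ [] w

/-- Apply a permutation vector to a labeled multitype tree: children are reordered at every
vertex, types and displacements following their vertices and edges. -/
def permApply {S : Type*} (σ : PermVec) (T : MTree S) : MTree S :=
  ⟨T.verts.image (permWord σ), fun w => T.type (invWord σ w), fun w => T.disp (invWord σ w)⟩

/-- The set `P_t` of admissible permutation vectors for `T`: at a vertex with `k` children the
permutation fixes everything above `k` and permutes `{1,…,k}`; away from the tree it is the
identity. -/
def PermSet {S : Type*} (T : MTree S) : Set PermVec :=
  {σ | (∀ v ∈ T.verts,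
          (∀ i : ℕ+, (i : ℕ) ≤ nChild T.verts v → ((σ v i : ℕ) ≤ nChild T.verts v)) ∧
          (∀ i : ℕ+, nChild T.verts v < (i : ℕ) → σ v i = i)) ∧
        ∀ v ∉ T.verts, σ v = 1}

/-- The law of the symmetrization of the (deterministic) tree `T`: the uniform average of the
point masses at `σ(T)`, `σ ∈ P_T`. -/
def symKernel {S : Type*} [MeasurableSpace S] (T : MTree S) : Measure (MTree S) :=
  ((PermSet T).ncard : ℝ≥0∞)⁻¹ •
    Measure.sum (fun σ : ↥(PermSet T) => Measure.dirac (permApply (σ : PermVec) T))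

/-- The symmetrization `ν^sym` of a law `ν` on labeled multitype plane trees. -/
def symLaw {S : Type*} [MeasurableSpace S] (ν : Measure (MTree S)) : Measure (MTree S) :=
  ν.bind symKernel

/-- A law is symmetric if it is equal to its symmetrization. -/
def IsSymmetricLaw {S : Type*} [MeasurableSpace S] (ν : Measure (MTree S)) : Prop :=
  symLaw ν = ν

/-! ### Valid laws -/

/-- Forget the displacements of a labeled tree. -/
def shape {S : Type*} (T : MTree S) : MTree S := ⟨T.verts, T.type, fun _ => 0⟩

/-- The vector of displacements from `v` to its (first `k`) children. -/
def dispVecAt {S : Type*} (T : MTree S) (v : Vertex) (k : ℕ) : Fin k → ℝ :=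
  fun i => T.disp (v ++ [(i : ℕ).succPNat])

/-- The child type vector of `v` (with `k` children). -/
def ctypeAt {S : Type*} (T : MTree S) (v : Vertex) (k : ℕ) : Fin k → S :=
  fun i => T.type (v ++ [(i : ℕ).succPNat])

/-- A family of displacement distributions: for each parent type and each child type vector of
each length `k`, a measure on `ℝ^k`. -/
abbrev DispFamily (S : Type*) : Type _ :=
  S → (k : ℕ) → (Fin k → S) → Measure (Fin k → ℝ)

/-- `ν` has displacement family `π`: conditionally on the underlying typed tree, the displacement
vectors at the vertices are independent, with laws given by `π` evaluated at the type of a vertex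
and its child type vector. -/
def HasDispFamily {S : Type*} [MeasurableSpace S] (ν : Measure (MTree S))
    (π : DispFamily S) : Prop :=
  (∀ r k s, IsProbabilityMeasure (π r k s)) ∧
  ∀ t : MTree S, ∀ B : (v : Vertex) → Set (Fin (nChild t.verts v) → ℝ),
    (∀ v, MeasurableSet (B v)) →
    ν {T | shape T = shape t ∧ ∀ v ∈ t.verts, dispVecAt T v (nChild t.verts v) ∈ B v}
      = ν {T | shape T = shape t}
        * ∏ v ∈ t.verts, π (t.type v) (nChild t.verts v) (ctypeAt t v (nChild t.verts v)) (B v)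

/-- A law on labeled multitype plane trees is valid if it is carried by plane trees, the law of
the underlying typed plane tree is symmetric, and the displacements admit a displacement family
as above. -/
def IsValidLaw {S : Type*} [MeasurableSpace S] (ν : Measure (MTree S)) : Prop :=
  ν {T | ¬ T.IsPlaneTree} = 0 ∧ IsSymmetricLaw (ν.map shape) ∧ ∃ π : DispFamily S, HasDispFamily ν π

/-! ### Convergence in distribution -/

/-- Convergence in distribution of a sequence of random elements (defined on possibly different
probability spaces) towards a limiting random element: the expectations of every bounded
continuous functional converge. -/
def TendstoInDist {Ω : ℕ → Type*} [∀ n, MeasurableSpace (Ω n)]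
    (P : ∀ n, Measure (Ω n)) {E : Type*} [TopologicalSpace E] (X : ∀ n, Ω n → E)
    {Ω₀ : Type*} [MeasurableSpace Ω₀] (P₀ : Measure Ω₀) (Y : Ω₀ → E) : Prop :=
  ∀ f : BoundedContinuousFunction E ℝ,
    Tendsto (fun n => ∫ ω, f (X n ω) ∂(P n)) atTop (𝓝 (∫ ω, f (Y ω) ∂P₀))

/-- Tightness of a family of laws of random elements of a topological space. -/
def TightSeq {E : Type*} [TopologicalSpace E] {Ω : ℕ → Type*} [∀ n, MeasurableSpace (Ω n)]
    (P : ∀ n, Measure (Ω n)) (X : ∀ n, Ω n → E) : Prop :=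
  ∀ ε : ℝ≥0∞, 0 < ε → ∃ K : Set E, IsCompact K ∧ ∀ n, P n {ω | X n ω ∉ K} ≤ ε

/-! ### Galton–Watson laws -/

instance {S : Type*} [MeasurableSpace S] : MeasurableSpace (List S) := ⊤

/-- The child type vector of `v`, as a list. -/
def ctypeList {S : Type*} (T : MTree S) (v : Vertex) : List S :=
  (List.range (nChild T.verts v)).map fun m => T.type (v ++ [m.succPNat])

/-- `ν` is the law of a multitype Galton–Watson tree with offspring distributions `p`:
the `p s` are permutation-invariant probability measures on finite type sequences, and the
probability that the typed tree equals a given finite plane tree `t` is the product over the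
vertices of `t` of the offspring probabilities of the child type vectors (times the probability
of the root type). -/
def IsGWLaw {S : Type*} [MeasurableSpace S] (ν : Measure (MTree S))
    (p : S → Measure (List S)) : Prop :=
  (∀ s, IsProbabilityMeasure (p s)) ∧
  (∀ s : S, ∀ l l' : List S, l.Perm l' → p s {l} = p s {l'}) ∧
  ∀ t : MTree S, t.IsPlaneTree →
    ν {T | T.verts = t.verts ∧ ∀ v ∈ t.verts, T.type v = t.type v}
      = ν {T | T.type [] = t.type []} * ∏ v ∈ t.verts, p (t.type v) {ctypeList t v}

/-- A tree is normalized if its type and displacement functions take default values off the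
vertex set, and (for unlabeled trees) all displacements vanish. -/
def Normalized {S : Type*} (s₀ : S) (T : MTree S) : Prop :=
  (∀ v ∉ T.verts, T.type v = s₀) ∧ T.disp = fun _ => 0

/-! ### Displacement families: symmetrization and centering -/

/-- The symmetrized displacement family `π^{sym}` defined by
`π^{u,sym}_s(B) = (1/k!) ∑_{σ ∈ 𝔖_k} π^u_{σ(s)}(σ(B))`. -/
def symFamily {S : Type*} (π : DispFamily S) : DispFamily S := fun r k s =>
  ((Nat.factorial k : ℝ≥0∞))⁻¹ •
    ∑ σ : Equiv.Perm (Fin k),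
      (π r k fun j => s (σ.symm j)).map fun x : Fin k → ℝ => fun j => x (σ j)

/-- A displacement family is locally centered if every coordinate of every displacement
distribution has mean zero. -/
def LocallyCentered {S : Type*} (π : DispFamily S) : Prop :=
  ∀ (r : S) (k : ℕ) (s : Fin k → S) (i : Fin k), (∫ x, x i ∂(π r k s)) = 0

/-- A displacement family is centered if, for every `k`, every parent type `r` and every vector
`z` of type counts summing to `k`, the sum over all ordered child type sequences with counts `z`
of the total mean displacement is zero. -/
def Centered {S : Type*} (π : DispFamily S) : Prop :=
  ∀ (k : ℕ) (r : S) (z : S →₀ ℕ), (z.sum fun _ n => n) = k →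
    (∑ᶠ s ∈ {s : Fin k → S | ∀ x : S,
        ((Finset.univ.filter fun i => s i = x).card = z x)},
      ∑ i : Fin k, ∫ x, x i ∂(π r k s)) = 0

/-! ### Subtrees spanned by finitely many vertices -/

/-- The vertex set of the subtree spanned by the vertices `r i` and their ancestors. -/
def spanVerts {k : ℕ} (r : Fin k → Vertex) : Finset Vertex :=
  insert ([] : Vertex) (Finset.univ.biUnion fun i => ((r i).inits).toFinset)

/-- The rank of the child index `i` of `p` among the child indices present in `s`. -/
def childRank (s : Finset Vertex) (p : Vertex) (i : ℕ+) : ℕ+ :=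
  ((s.filter fun w => ∃ j : ℕ+, j ≤ i ∧ w = p ++ [j]).card).toPNat'

def reindexAux (s : Finset Vertex) : Vertex → Vertex → Vertex
  | _, [] => []
  | p, i :: rest => childRank s p i :: reindexAux s (p ++ [i]) rest

/-- The Ulam–Harris label, in the plane tree with vertex set `s`, of the node corresponding to
the vertex `v ∈ s`: children are relabeled consecutively, preserving their order. -/
def reindex (s : Finset Vertex) (v : Vertex) : Vertex := reindexAux s [] v

/-- The set of child indices of `p` present in `s`. -/
def childIdxs (s : Finset Vertex) (p : Vertex) : Finset ℕ+ :=
  (s.filter fun w => ∃ i : ℕ+, w = p ++ [i]).image fun w => w.getLastD 1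

/-- The `m`-th smallest child index of `p` present in `s`. -/
def nthChildIndex (s : Finset Vertex) (p : Vertex) (m : ℕ+) : ℕ+ :=
  ((childIdxs s p).sort (· ≤ ·)).getD ((m : ℕ) - 1) 1

def unIndexAux (s : Finset Vertex) : Vertex → Vertex → Vertex
  | _, [] => []
  | p, m :: rest =>
      nthChildIndex s p m :: unIndexAux s (p ++ [nthChildIndex s p m]) rest

/-- The inverse of `reindex s`. -/
def unIndex (s : Finset Vertex) (w : Vertex) : Vertex := unIndexAux s [] w

/-- The labeled subtree of `T` with vertex set `s ⊆ T.verts`, viewed as a plane tree (with the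
plane structure, the types and the displacements inherited from `T`). -/
def spanTree {S : Type*} (T : MTree S) (s : Finset Vertex) : MTree S :=
  ⟨s.image (reindex s), fun w => T.type (unIndex s w), fun w => T.disp (unIndex s w)⟩

/-- The labeled subtree of `T` with vertex set `s`, with the displacements on child edges of
branchpoints replaced by `0` (the modified labeling `d⟨·⟩`). -/
def spanTreeMod {S : Type*} (T : MTree S) (s : Finset Vertex) : MTree S :=
  ⟨(spanTree T s).verts, (spanTree T s).type,
    fun w => if nChild (spanTree T s).verts w.dropLast = 1 then (spanTree T s).disp w else 0⟩

/-- `R` is a uniform sample of `k` vertices from the random labeled tree `X`: conditionally on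
`X`, the coordinates of `R` are independent and uniformly distributed on the vertex set of `X`. -/
def UniformSample {Ω : Type*} [MeasurableSpace Ω] (P : Measure Ω) {S : Type*} [MeasurableSpace S]
    (X : Ω → MTree S) {k : ℕ} (R : Ω → Fin k → Vertex) : Prop :=
  ∀ A : Set (MTree S), MeasurableSet A → ∀ r : Fin k → Vertex,
    P {ω | X ω ∈ A ∧ R ω = r}
      = ∫⁻ ω in {ω | X ω ∈ A},
          (if ∀ i, r i ∈ (X ω).verts then (((X ω).verts.card : ℝ≥0∞) ^ k)⁻¹ else 0) ∂P

/-! ### Lexicographic enumeration, height process -/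

/-- The vertices of `t` in lexicographic order. -/
def lexEnum (t : Finset Vertex) : List Vertex := t.sort (· ≤ ·)

/-- The `i`-th vertex in lexicographic order (`v_{|t|} = v_0` by convention, since `v_0` is the
root `[]`, which is also the default value). -/
def lexVertex (t : Finset Vertex) (i : ℕ) : Vertex := (lexEnum t).getD i []

/-- The height process `H_t`, as a function on `ℝ`. -/
def heightFun {S : Type*} (T : MTree S) (s : ℝ) : ℝ :=
  interpFun T.verts.card (fun i => ((lexVertex T.verts i).length : ℝ)) s

/-- The lexicographic label process `S_t`, as a function on `ℝ`. -/
def lexLabelFun {S : Type*} (T : MTree S) (s : ℝ) : ℝ :=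
  interpFun T.verts.card (fun i => labelOf T (lexVertex T.verts i)) s

/-- The height process `H_t`, as a continuous map on `[0,1]`. -/
def heightProcess {S : Type*} (T : MTree S) : C(unitInterval, ℝ) :=
  interpMap T.verts.card fun i => ((lexVertex T.verts i).length : ℝ)

/-- The lexicographic label process `S_t`, as a continuous map on `[0,1]`. -/
def lexLabelProcess {S : Type*} (T : MTree S) : C(unitInterval, ℝ) :=
  interpMap T.verts.card fun i => labelOf T (lexVertex T.verts i)

/-- `j_t(i) = 2i - h(v_i)` for `i < |t|`, and `j_t(i) = 2|t| - 2` otherwise. -/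
def jIdx (t : Finset Vertex) (i : ℕ) : ℕ :=
  if i < t.card then 2 * i - (lexVertex t i).length else 2 * t.card - 2

/-- `φ_t(s) = |t|⁻¹ · sup {i ≤ |t| : j_t(i) ≤ s(2|t|-2)}`. -/
def phi (t : Finset Vertex) (s : ℝ) : ℝ :=
  ((sSup {i : ℕ | i ≤ t.card ∧ (jIdx t i : ℝ) ≤ s * (2 * t.card - 2)} : ℕ) : ℝ) / t.card

/-- The increasing reordering of the finite vector `f`. -/
def sortFun {k : ℕ} (f : Fin k → ℝ) (i : ℕ) : ℝ :=
  ((List.ofFn f).insertionSort (· ≤ ·)).getD i 0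

instance : MeasurableSpace C(unitInterval, ℝ) := borel _



/-!
Each step of the contour exploration either climbs to the parent or descends to an unvisited
child, so after `n` steps of which `i` are descents the current height is `i - (n - i)`:
`n + h(θ_n) = 2i`. The point is that the `i`-th descent discovers exactly `v_i`. The exploration
only climbs out of a subtree once that subtree is exhausted, so the visited set stays a
lexicographic initial segment `{v_0, …, v_i}` and the least unvisited child of the current vertex
is the lexicographic successor of `v_i`. Hence `v_i` is first reached at time `2i - h(v_i)`, and
every step strictly between the discoveries of `v_i` and `v_{i+1}` is a climb.
-/

end TreeSym

namespace List

variable {α : Type*} {l l₁ l₂ u w x : List α}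

theorem IsPrefix.eq_of_length_eq (h₁ : l₁ <+: l) (h₂ : l₂ <+: l) (hl : l₁.length = l₂.length) :
    l₁ = l₂ :=
  (prefix_of_prefix_length_le h₁ h₂ hl.le).eq_of_length hl

theorem dropLast_eq_of_isPrefix (h₁ : l₁ <+: l) (h₂ : l₂ <+: l)
    (hl : l₂.length = l₁.length + 1) : l₂.dropLast = l₁ :=
  ((dropLast_prefix l₂).trans h₂).eq_of_length_eq h₁ (by simp [hl])

variable [LinearOrder α]

-- Core's `List.IsPrefix.le` concerns core's `≤` on lists, which Mathlib's `List.LE'` overrides.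
theorem IsPrefix.le' (h : l₁ <+: l₂) : l₁ ≤ l₂ :=
  not_lt.mp h.le

theorem IsPrefix.isPrefix_of_le_of_le (h : u <+: w) (hux : u ≤ x) (hxw : x ≤ w) : u <+: x := by
  induction u generalizing x w with
  | nil => exact nil_prefix
  | cons a u ih =>
    obtain ⟨s, rfl⟩ := h
    cases x with
    | nil => exact absurd hux (not_le.mpr (Lex.nil : Lex (· < ·) [] (a :: u)))
    | cons b x =>
      rw [cons_append, ← not_lt, cons_lt_cons_iff, not_or, not_and] at hxw
      rw [← not_lt, cons_lt_cons_iff, not_or, not_and] at hux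
      obtain rfl : b = a := le_antisymm (not_lt.mp hxw.1) (not_lt.mp hux.1)
      exact (prefix_cons_inj b).mpr
        (ih ⟨s, rfl⟩ (not_lt.mp (hux.2 rfl)) (not_lt.mp (hxw.2 rfl)))

theorem append_singleton_le_append_singleton (l : List α) {a b : α} (hab : a ≤ b) :
    l ++ [a] ≤ l ++ [b] := by
  rcases hab.lt_or_eq with hab | rfl
  · exact le_of_lt (Lex.append_left _ (Lex.rel hab) l)
  · exact le_rfl

end List

namespace TreeSym

theorem lcpLen_of_isPrefix {p u : Vertex} (h : p <+: u) : lcpLen u p = p.length := by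
  induction p generalizing u with
  | nil => cases u <;> rfl
  | cons a p ih =>
    obtain ⟨s, rfl⟩ := h
    simp [lcpLen, ih ⟨s, rfl⟩]

theorem treeDist_of_isPrefix {p u : Vertex} (h : p <+: u) :
    treeDist u p = u.length - p.length := by
  rw [treeDist, lcpLen_of_isPrefix h]
  omega

section LexVertex

variable {t : Finset Vertex} {i j : ℕ} {w : Vertex}

theorem lexVertex_eq_orderEmbOfFin (hi : i < t.card) :
    lexVertex t i = t.orderEmbOfFin rfl ⟨i, hi⟩ := by
  simp [lexVertex, lexEnum, Finset.orderEmbOfFin_apply, hi]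

theorem lexVertex_mem (hi : i < t.card) : lexVertex t i ∈ t := by
  rw [lexVertex_eq_orderEmbOfFin hi]
  exact Finset.orderEmbOfFin_mem t rfl _

theorem lexVertex_le_lexVertex_iff (hi : i < t.card) (hj : j < t.card) :
    lexVertex t i ≤ lexVertex t j ↔ i ≤ j := by
  rw [lexVertex_eq_orderEmbOfFin hi, lexVertex_eq_orderEmbOfFin hj, OrderEmbedding.le_iff_le,
    Fin.mk_le_mk]

theorem lexVertex_lt_lexVertex_iff (hi : i < t.card) (hj : j < t.card) :
    lexVertex t i < lexVertex t j ↔ i < j := by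
  rw [lexVertex_eq_orderEmbOfFin hi, lexVertex_eq_orderEmbOfFin hj, OrderEmbedding.lt_iff_lt,
    Fin.mk_lt_mk]

theorem exists_lexVertex_eq (hw : w ∈ t) : ∃ i < t.card, lexVertex t i = w := by
  rw [← Finset.mem_coe, ← Finset.range_orderEmbOfFin t rfl] at hw
  obtain ⟨⟨i, hi⟩, rfl⟩ := hw
  exact ⟨i, hi, lexVertex_eq_orderEmbOfFin hi⟩

theorem exists_le_lexVertex_eq_iff (hi : i < t.card) (hw : w ∈ t) :
    (∃ j ≤ i, lexVertex t j = w) ↔ w ≤ lexVertex t i := by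
  constructor
  · rintro ⟨j, hji, rfl⟩
    exact (lexVertex_le_lexVertex_iff (hji.trans_lt hi) hi).mpr hji
  · intro hwi
    obtain ⟨j, hj, rfl⟩ := exists_lexVertex_eq hw
    exact ⟨j, (lexVertex_le_lexVertex_iff hj hi).mp hwi, rfl⟩

theorem lexVertex_succ_eq_of_isLeast (hi : i < t.card)
    (hw : IsLeast {u | u ∈ t ∧ lexVertex t i < u} w) :
    i + 1 < t.card ∧ lexVertex t (i + 1) = w := by
  obtain ⟨k, hk, rfl⟩ := exists_lexVertex_eq hw.1.1
  have hik : i < k := (lexVertex_lt_lexVertex_iff hi hk).mp hw.1.2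
  have hi1 : i + 1 < t.card := by omega
  have hlt : lexVertex t i < lexVertex t (i + 1) :=
    (lexVertex_lt_lexVertex_iff hi hi1).mpr i.lt_succ_self
  exact ⟨hi1, le_antisymm ((lexVertex_le_lexVertex_iff hi1 hk).mpr hik)
    (hw.2 ⟨lexVertex_mem hi1, hlt⟩)⟩

theorem lexVertex_zero (ht : IsPlaneTreeSet t) : lexVertex t 0 = [] := by
  obtain ⟨k, hk, hvk⟩ := exists_lexVertex_eq ht.1
  refine le_antisymm ?_ List.nil_prefix.le'
  rw [← hvk]
  exact (lexVertex_le_lexVertex_iff (Nat.zero_lt_of_lt hk) hk).mpr k.zero_le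

end LexVertex

section Contour

variable {t : Finset Vertex} {n i : ℕ}

def freshChildren (t : Finset Vertex) (n : ℕ) : Set ℕ :=
  {m | theta t n ++ [m.succPNat] ∈ t ∧ theta t n ++ [m.succPNat] ∉ contourHist t n}

theorem contourHist_succ (t : Finset Vertex) (n : ℕ) :
    contourHist t (n + 1) = theta t (n + 1) :: contourHist t n := by
  simp only [theta, contourHist]
  split_ifs <;> rfl

theorem theta_mem_contourHist (t : Finset Vertex) : ∀ n, theta t n ∈ contourHist t n
  | 0 => List.mem_singleton_self _
  | n + 1 => contourHist_succ t n ▸ List.mem_cons_self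

theorem theta_succ_of_nonempty (h : (freshChildren t n).Nonempty) :
    theta t (n + 1) = theta t n ++ [(sInf (freshChildren t n)).succPNat] := by
  simp only [theta, contourHist]
  split_ifs with hc
  · rfl
  · exact absurd h hc

theorem theta_succ_of_eq_empty (h : freshChildren t n = ∅) :
    theta t (n + 1) = (theta t n).dropLast := by
  simp only [theta, contourHist]
  split_ifs with hc
  · exact absurd h (Set.nonempty_iff_ne_empty.mp hc)
  · rfl

structure ContourInv (t : Finset Vertex) (n i : ℕ) : Prop where
  lt_card : i < t.card
  mem_contourHist_iff : ∀ w, w ∈ contourHist t n ↔ ∃ j ≤ i, lexVertex t j = w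
  theta_isPrefix : theta t n <+: lexVertex t i
  add_length_theta : n + (theta t n).length = 2 * i
  subtree_exhausted : ∀ a, theta t n ++ [a] <+: lexVertex t i →
    ∀ w ∈ t, lexVertex t i < w → ¬ theta t n ++ [a] <+: w

theorem contourInv_zero (ht : IsPlaneTreeSet t) : ContourInv t 0 0 where
  lt_card := Finset.card_pos.mpr ⟨[], ht.1⟩
  mem_contourHist_iff w := by
    simp [contourHist, lexVertex_zero ht, eq_comm]
  theta_isPrefix := List.nil_prefix
  add_length_theta := rfl
  subtree_exhausted a ha := by
    simp [lexVertex_zero ht, theta, contourHist] at ha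

namespace ContourInv

variable {w : Vertex}

theorem theta_le (h : ContourInv t n i) : theta t n ≤ lexVertex t i :=
  h.theta_isPrefix.le'

theorem mem_contourHist_iff_le (h : ContourInv t n i) (hw : w ∈ t) :
    w ∈ contourHist t n ↔ w ≤ lexVertex t i :=
  (h.mem_contourHist_iff w).trans (exists_le_lexVertex_eq_iff h.lt_card hw)

theorem exists_child_isPrefix (h : ContourInv t n i) (hlt : lexVertex t i < w)
    (hpre : theta t n <+: w) : ∃ b, theta t n ++ [b] <+: w := by
  obtain ⟨s, rfl⟩ := hpre
  cases s with
  | nil => exact absurd (h.theta_le.trans_lt hlt) (by simp)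
  | cons b s => exact ⟨b, s, by simp⟩

theorem natPred_mem_freshChildren (ht : IsPlaneTreeSet t) (h : ContourInv t n i) {b : ℕ+}
    (hw : w ∈ t) (hlt : lexVertex t i < w) (hb : theta t n ++ [b] <+: w) :
    b.natPred ∈ freshChildren t n := by
  rw [freshChildren, Set.mem_ofPred_eq, PNat.succPNat_natPred]
  have hbt : theta t n ++ [b] ∈ t := ht.2.1 w hw _ hb
  refine ⟨hbt, fun hvis => ?_⟩
  have hle := (h.mem_contourHist_iff_le hbt).mp hvis
  exact h.subtree_exhausted b (hb.isPrefix_of_le_of_le hle hlt.le) w hw hlt hb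

theorem not_isPrefix_of_eq_empty (ht : IsPlaneTreeSet t) (h : ContourInv t n i)
    (hF : freshChildren t n = ∅) (hw : w ∈ t) (hlt : lexVertex t i < w) :
    ¬ theta t n <+: w := fun hpre => by
  obtain ⟨b, hb⟩ := h.exists_child_isPrefix hlt hpre
  exact Set.eq_empty_iff_forall_notMem.mp hF _ (h.natPred_mem_freshChildren ht hw hlt hb)

theorem theta_ne_nil_of_eq_empty (ht : IsPlaneTreeSet t) (h : ContourInv t n i)
    (hF : freshChildren t n = ∅) (hi : i + 1 < t.card) : theta t n ≠ [] := fun h0 =>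
  h.not_isPrefix_of_eq_empty ht hF (lexVertex_mem hi)
    ((lexVertex_lt_lexVertex_iff h.lt_card hi).mpr i.lt_succ_self) (h0 ▸ List.nil_prefix)

theorem isLeast_theta_succ (ht : IsPlaneTreeSet t) (h : ContourInv t n i)
    (hF : (freshChildren t n).Nonempty) :
    IsLeast {u | u ∈ t ∧ lexVertex t i < u} (theta t (n + 1)) := by
  have hm := Nat.sInf_mem hF
  rw [theta_succ_of_nonempty hF]
  refine ⟨⟨hm.1, not_le.mp fun hle => hm.2 ((h.mem_contourHist_iff_le hm.1).mpr hle)⟩, ?_⟩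
  rintro w ⟨hw, hlt⟩
  by_cases hpre : theta t n <+: w
  · obtain ⟨b, hb⟩ := h.exists_child_isPrefix hlt hpre
    have hinf := Nat.sInf_le (h.natPred_mem_freshChildren ht hw hlt hb)
    have hsucc : (sInf (freshChildren t n)).succPNat ≤ b := by
      rw [← PNat.coe_le_coe, Nat.succPNat_coe]
      have := PNat.natPred_add_one b
      omega
    exact (List.append_singleton_le_append_singleton _ hsucc).trans hb.le'
  · refine le_of_not_gt fun hgt => hpre ?_
    exact List.prefix_append _ _ |>.isPrefix_of_le_of_le (h.theta_le.trans hlt.le) hgt.le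

theorem descend (ht : IsPlaneTreeSet t) (h : ContourInv t n i)
    (hF : (freshChildren t n).Nonempty) :
    ContourInv t (n + 1) (i + 1) ∧ theta t (n + 1) = lexVertex t (i + 1) := by
  obtain ⟨hi, hv⟩ := lexVertex_succ_eq_of_isLeast h.lt_card (h.isLeast_theta_succ ht hF)
  refine ⟨⟨hi, fun w => ?_, hv ▸ List.prefix_refl _, ?_, fun a ha => ?_⟩, hv.symm⟩
  · rw [contourHist_succ, List.mem_cons, h.mem_contourHist_iff, ← hv]
    simp [Nat.le_succ_iff, or_and_right, exists_or, eq_comm, or_comm]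
  · have := h.add_length_theta
    rw [theta_succ_of_nonempty hF, List.length_append, List.length_singleton]
    omega
  · rw [← hv] at ha
    exact absurd ha.length_le (by simp)

theorem climb (ht : IsPlaneTreeSet t) (h : ContourInv t n i) (hF : freshChildren t n = ∅)
    (hθ : theta t n ≠ []) : ContourInv t (n + 1) i := by
  have hd := theta_succ_of_eq_empty hF
  have hdpre : (theta t n).dropLast <+: lexVertex t i :=
    (List.dropLast_prefix _).trans h.theta_isPrefix
  have hdvis : ∃ j ≤ i, lexVertex t j = (theta t n).dropLast :=
    (exists_le_lexVertex_eq_iff h.lt_card (ht.2.1 _ (lexVertex_mem h.lt_card) _ hdpre)).mpr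
      hdpre.le'
  have hlen : (theta t n).dropLast.length + 1 = (theta t n).length := by
    rw [List.length_dropLast]
    have := List.length_pos_iff.mpr hθ
    omega
  refine ⟨h.lt_card, fun w => ?_, hd ▸ hdpre, ?_, fun a ha w hw hlt hpre => ?_⟩
  · rw [contourHist_succ, List.mem_cons, h.mem_contourHist_iff, hd]
    exact ⟨by rintro (rfl | hw); exacts [hdvis, hw], Or.inr⟩
  · have := h.add_length_theta
    rw [hd]
    omega
  · rw [hd] at ha hpre
    have hθa : (theta t n).dropLast ++ [a] = theta t n :=
      ha.eq_of_length_eq h.theta_isPrefix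
        (by simp only [List.length_append, List.length_singleton, hlen])
    exact h.not_isPrefix_of_eq_empty ht hF hw hlt (hθa ▸ hpre)

theorem step (ht : IsPlaneTreeSet t) (h : ContourInv t n i)
    (hg : i + 1 < t.card ∨ theta t n ≠ []) :
    ContourInv t (n + 1) i ∨
      (ContourInv t (n + 1) (i + 1) ∧ theta t (n + 1) = lexVertex t (i + 1)) := by
  rcases (freshChildren t n).eq_empty_or_nonempty with hF | hF
  · exact Or.inl (h.climb ht hF (hg.elim (h.theta_ne_nil_of_eq_empty ht hF) id))
  · exact Or.inr (h.descend ht hF)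

end ContourInv

end Contour

section FirstVisit

variable {t : Finset Vertex} {i : ℕ}

theorem ContourInv.exists_theta_eq_lexVertex_succ {n : ℕ} (ht : IsPlaneTreeSet t)
    (h : ContourInv t n i) (hi : i + 1 < t.card) :
    ∃ m, ContourInv t m (i + 1) ∧ theta t m = lexVertex t (i + 1) := by
  rcases h.step ht (Or.inl hi) with h' | h'
  · -- by the time–height identity, a climb lowers the height
    have := h.add_length_theta
    have := h'.add_length_theta
    exact h'.exists_theta_eq_lexVertex_succ ht hi
  · exact ⟨n + 1, h'⟩
termination_by (theta t n).length
decreasing_by omega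

theorem exists_contourInv_theta_eq_lexVertex (ht : IsPlaneTreeSet t) :
    ∀ i < t.card, ∃ n, ContourInv t n i ∧ theta t n = lexVertex t i
  | 0, _ => ⟨0, contourInv_zero ht, (lexVertex_zero ht).symm⟩
  | i + 1, hi => by
    obtain ⟨n, h, -⟩ := exists_contourInv_theta_eq_lexVertex ht i (by omega)
    exact h.exists_theta_eq_lexVertex_succ ht hi

theorem jIdx_add_length (ht : IsPlaneTreeSet t) (hi : i < t.card) :
    jIdx t i + (lexVertex t i).length = 2 * i := by
  obtain ⟨n, h, hθ⟩ := exists_contourInv_theta_eq_lexVertex ht i hi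
  have := h.add_length_theta
  rw [hθ] at this
  rw [jIdx, if_pos hi]
  omega

theorem contourInv_jIdx (ht : IsPlaneTreeSet t) (hi : i < t.card) :
    ContourInv t (jIdx t i) i ∧ theta t (jIdx t i) = lexVertex t i := by
  obtain ⟨n, h, hθ⟩ := exists_contourInv_theta_eq_lexVertex ht i hi
  have := h.add_length_theta
  rw [hθ, ← jIdx_add_length ht hi, Nat.add_right_cancel_iff] at this
  exact this ▸ ⟨h, hθ⟩

theorem exists_contourInv (ht : IsPlaneTreeSet t) :
    ∀ n ≤ 2 * (t.card - 1), ∃ i, ContourInv t n i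
  | 0, _ => ⟨0, contourInv_zero ht⟩
  | n + 1, hn => by
    obtain ⟨i, h⟩ := exists_contourInv ht n (by omega)
    have hg : i + 1 < t.card ∨ theta t n ≠ [] := by
      by_contra! h0
      have := h.add_length_theta
      rw [h0.2, List.length_nil] at this
      omega
    rcases h.step ht hg with h' | h'
    exacts [⟨i, h'⟩, ⟨i + 1, h'.1⟩]

theorem jIdx_le_of_theta_eq (ht : IsPlaneTreeSet t) (hi : i < t.card) {n : ℕ}
    (hn : theta t n = lexVertex t i) : jIdx t i ≤ n := by
  have hji := jIdx_add_length ht hi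
  by_cases hnc : n ≤ 2 * (t.card - 1)
  · obtain ⟨d, h⟩ := exists_contourInv ht n hnc
    obtain ⟨j, hjd, hj⟩ := (h.mem_contourHist_iff _).mp (hn ▸ theta_mem_contourHist t n)
    have hid : i ≤ d :=
      ((lexVertex_le_lexVertex_iff hi (hjd.trans_lt h.lt_card)).mp hj.ge).trans hjd
    have := h.add_length_theta
    rw [hn] at this
    omega
  · omega

theorem contourInv_jIdx_add (ht : IsPlaneTreeSet t) (hi : i < t.card) :
    ∀ k < jIdx t (i + 1) - jIdx t i, ContourInv t (jIdx t i + k) i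
  | 0, _ => (contourInv_jIdx ht hi).1
  | k + 1, hk => by
    have h := contourInv_jIdx_add ht hi k (by omega)
    have hji := jIdx_add_length ht hi
    have htime := h.add_length_theta
    have hg : i + 1 < t.card ∨ theta t (jIdx t i + k) ≠ [] := by
      by_contra! h0
      rw [h0.2, List.length_nil] at htime
      rw [jIdx, if_neg (by omega)] at hk
      omega
    rcases h.step ht hg with h' | ⟨h', hθ⟩
    · exact h'
    · -- a descent would discover `v_{i+1}` before time `jIdx t (i + 1)`
      have := h'.add_length_theta
      rw [hθ] at this
      have := jIdx_add_length ht h'.lt_card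
      omega

end FirstVisit

/-- facts in the proof of Proposition 3.7. For a rooted plane tree with
vertices `v_0, …, v_{|t|-1}` in lexicographic order: the first visit time of `v_i` by the contour
exploration is `2i - h(v_i)`; moreover, with `j(i) = 2i - h(v_i)` (and `j(|t|) = 2|t|-2`),
for `1 ≤ k < j(i+1) - j(i)` the vertex `θ_t(j(i)+k)` is the parent of `θ_t(j(i)+k-1)`, and
`dist_t(θ_t(j(i)), θ_t(j(i)+k)) = k`. -/
theorem statement15 (t : Finset Vertex) (ht : IsPlaneTreeSet t) :
    (∀ i < t.card,
        sInf {j : ℕ | theta t j = lexVertex t i} = 2 * i - (lexVertex t i).length)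
    ∧ ∀ i < t.card, ∀ k : ℕ, 1 ≤ k → k < jIdx t (i + 1) - jIdx t i →
        theta t (jIdx t i + k) = (theta t (jIdx t i + k - 1)).dropLast
        ∧ treeDist (theta t (jIdx t i)) (theta t (jIdx t i + k)) = k := by
  refine ⟨fun i hi => ?_, fun i hi k hk1 hk2 => ?_⟩
  · have hθ := (contourInv_jIdx ht hi).2
    have hj : jIdx t i = 2 * i - (lexVertex t i).length := if_pos hi
    rw [← hj]
    exact le_antisymm (Nat.sInf_le hθ) (le_csInf ⟨_, hθ⟩ fun _ => jIdx_le_of_theta_eq ht hi)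
  · have hk := contourInv_jIdx_add ht hi k hk2
    have hk' := contourInv_jIdx_add ht hi (k - 1) (by omega)
    have hji := jIdx_add_length ht hi
    have hk_time := hk.add_length_theta
    have hk'_time := hk'.add_length_theta
    refine ⟨?_, ?_⟩
    · rw [show jIdx t i + k - 1 = jIdx t i + (k - 1) by omega]
      exact (List.dropLast_eq_of_isPrefix hk.theta_isPrefix hk'.theta_isPrefix (by omega)).symm
    · rw [(contourInv_jIdx ht hi).2, treeDist_of_isPrefix hk.theta_isPrefix]
      omega

end TreeSym
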